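/- arXiv:1709.07952 — 5 statements merged into one kernel-verified Lean document; each statement's English description precedes it below -/
import Mathlib

section
/- Let C₀ ⊆ F_q^ℓ be a p-divisible linear code (p prime) with p | ℓ, let C be the F_p-linear code of length n = qℓ whose parity-check matrix is the incidence matrix M of the transversal design associated to C₀ (rows indexed by codewords of C₀, columns by F_q × {1,…,ℓ}, M[c,(α,i)] = 1 iff c_i = α). Then the dual code C^⊥ is contained in C, and consequently dim C ≥ n/2. -/
/-!
The entry `(c, c')` of `M Mᵀ` counts the coordinates where the codewords `c` and `c'` agree,
i.e. `ℓ - d(c, c')`, and `d(c, c') = wt(c' - c)` is divisible by `p` since `C₀` is linear and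
`p`-divisible. Hence `M Mᵀ = 0` over `𝔽_p`: the row space of `M` is self-orthogonal, so it lies in
`ker M`, and rank–nullity gives `n = rank M + dim ker M ≤ 2 dim ker M`.
-/

open Finset Matrix

namespace Matrix

variable {m n R : Type*} [Fintype n]

theorem span_rows_le_ker_mulVecLin_of_mul_transpose_eq_zero [CommRing R]
    {M : Matrix m n R} (hM : M * Mᵀ = 0) :
    Submodule.span R (Set.range M) ≤ LinearMap.ker M.mulVecLin := by
  rw [Submodule.span_le]
  rintro _ ⟨j, rfl⟩
  ext i
  exact congr_fun₂ hM i j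

theorem card_le_two_mul_finrank_ker_of_mul_transpose_eq_zero [Field R] [Finite m]
    {M : Matrix m n R} (hM : M * Mᵀ = 0) :
    Fintype.card n ≤ 2 * Module.finrank R (LinearMap.ker M.mulVecLin) := by
  have h_rank : M.rank ≤ Module.finrank R (LinearMap.ker M.mulVecLin) := by
    rw [rank_eq_finrank_span_row]
    exact Submodule.finrank_mono (span_rows_le_ker_mulVecLin_of_mul_transpose_eq_zero hM)
  have := LinearMap.finrank_range_add_finrank_ker M.mulVecLin
  rw [Module.finrank_fintype_fun_eq_card] at this
  change M.rank + _ = _ at this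
  omega

end Matrix

section Hamming

variable {ι β : Type*} [Fintype ι] [DecidableEq β]

theorem card_filter_eq_add_hammingDist (x y : ι → β) :
    #{i | x i = y i} + hammingDist x y = Fintype.card ι :=
  card_filter_add_card_filter_not _

theorem dvd_card_filter_eq_of_dvd_hammingDist {p : ℕ} {x y : ι → β}
    (hcard : p ∣ Fintype.card ι) (hdist : p ∣ hammingDist x y) : p ∣ #{i | x i = y i} := by
  rwa [← Nat.dvd_add_left hdist, card_filter_eq_add_hammingDist]

end Hamming

/-- The row of a codeword `x` in the incidence matrix of the transversal design. -/
def graphIndicator (R : Type*) {F ι : Type*} [Zero R] [One R] [DecidableEq F] (x : ι → F) :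
    F × ι → R :=
  fun q => if x q.2 = q.1 then 1 else 0

theorem graphIndicator_dotProduct_graphIndicator {R F ι : Type*} [Semiring R] [Fintype F]
    [DecidableEq F] [Fintype ι] (x y : ι → F) :
    graphIndicator R x ⬝ᵥ graphIndicator R y = #{i | x i = y i} := by
  simp only [dotProduct, graphIndicator, Fintype.sum_prod_type_right, ite_zero_mul_ite_zero,
    mul_one, natCast_card_filter]
  refine sum_congr rfl fun i _ => ?_
  by_cases h : x i = y i
  · simp [h]
  · refine (sum_eq_zero fun α _ => if_neg ?_).trans (if_neg h).symm
    rintro ⟨hx, hy⟩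
    exact h (hx.trans hy.symm)

/-- For a p-divisible linear code C₀ ⊆ F_q^ℓ with p ∣ ℓ, the code C = ker M
(over F_p) defined by the incidence matrix M of the associated transversal
design contains its dual (the row space of M), and dim C ≥ n/2 with n = qℓ. -/
theorem stmt7 {F : Type*} [Field F] [Fintype F] [DecidableEq F]
    (p ℓ : ℕ) [Fact p.Prime] (hpl : p ∣ ℓ)
    (C₀ : Submodule F (Fin ℓ → F))
    (hdiv : ∀ c ∈ C₀, p ∣ hammingNorm c)
    (M : Matrix C₀ (F × Fin ℓ) (ZMod p))
    (hM : ∀ (c : C₀) (q : F × Fin ℓ),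
      M c q = if c.1 q.2 = q.1 then 1 else 0) :
    Submodule.span (ZMod p) (Set.range fun c : C₀ => M c)
      ≤ LinearMap.ker M.mulVecLin ∧
    Fintype.card F * ℓ ≤
      2 * Module.finrank (ZMod p) (LinearMap.ker M.mulVecLin) := by
  have hMMt : M * Mᵀ = 0 := by
    ext c c'
    have h_dist : p ∣ hammingDist c.1 c'.1 := by
      rw [hammingDist_eq_hammingNorm]
      exact hdiv _ (C₀.add_mem (C₀.neg_mem c.2) c'.2)
    have h_row : ∀ c : C₀, M c = graphIndicator (ZMod p) c.1 := fun c => funext (hM c)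
    change M c ⬝ᵥ M c' = 0
    rw [h_row, h_row, graphIndicator_dotProduct_graphIndicator, ZMod.natCast_eq_zero_iff]
    exact dvd_card_filter_eq_of_dvd_hammingDist (by rwa [Fintype.card_fin]) h_dist
  refine ⟨Matrix.span_rows_le_ker_mulVecLin_of_mul_transpose_eq_zero hMMt, ?_⟩
  simpa using Matrix.card_le_two_mul_finrank_ker_of_mul_transpose_eq_zero hMMt
end

section
/- Let T = (X, B, G) be a transversal design TD_λ(ℓ, s), and let q = p^e with p prime such that p does not divide λs. Then the F_q-linear code C whose parity-check matrix is the incidence matrix of T (rows are incidence vectors of blocks) satisfies: every codeword of C is constant on each group of G. In particular, dim_{F_q} C ≤ ℓ. -/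
/-- If p does not divide λs, then every codeword of the F_q-linear code
(q = p^e) defined by a transversal design TD_λ(ℓ, s) is constant on each
group; in particular the code has dimension at most ℓ. -/
theorem stmt8 {X : Type*} [Fintype X] [DecidableEq X]
    {F : Type*} [Field F] [Fintype F]
    (p e ℓ s lam : ℕ) [Fact p.Prime] (he : 1 ≤ e)
    (hq : Fintype.card F = p ^ e)
    (hndvd : ¬ p ∣ lam * s)
    (hℓ : 2 ≤ ℓ) (hs : 2 ≤ s) (hlam : 1 ≤ lam)
    (𝓑 𝒢 : Finset (Finset X))
    (hX : Fintype.card X = ℓ * s)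
    (hGcard : 𝒢.card = ℓ)
    (hGpart : ∀ x : X, ∃! G, G ∈ 𝒢 ∧ x ∈ G)
    (hGsize : ∀ G ∈ 𝒢, G.card = s)
    (hBsize : ∀ B ∈ 𝓑, B.card = ℓ)
    (hpair : ∀ x y : X, x ≠ y →
      ((𝒢.filter (fun G => x ∈ G ∧ y ∈ G)).card = 1 ∧
        (𝓑.filter (fun B => x ∈ B ∧ y ∈ B)).card = 0) ∨
      ((𝒢.filter (fun G => x ∈ G ∧ y ∈ G)).card = 0 ∧
        (𝓑.filter (fun B => x ∈ B ∧ y ∈ B)).card = lam))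
    (C : Submodule F (X → F))
    (hC : ∀ c : X → F, c ∈ C ↔ ∀ B ∈ 𝓑, ∑ x ∈ B, c x = 0) :
    (∀ c ∈ C, ∀ G ∈ 𝒢, ∀ x ∈ G, ∀ y ∈ G, c x = c y) ∧
    Module.finrank F C ≤ ℓ := by
  classical
  have hp : p.Prime := Fact.out
  -- the characteristic of F is p
  haveI hcharF : CharP F p := by
    obtain ⟨n, hrp, hcard⟩ := FiniteField.card F (ringChar F)
    have hdvd : ringChar F ∣ p := by
      have h1 : ringChar F ∣ p ^ e := by
        rw [← hq, hcard]
        exact dvd_pow_self _ (by exact_mod_cast n.pos.ne')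
      exact hrp.dvd_of_dvd_pow h1
    have heq : ringChar F = p := (Nat.prime_dvd_prime_iff_eq hrp hp).mp hdvd
    rw [← heq]; exact ringChar.charP F
  have hls : ((lam * s : ℕ) : F) ≠ 0 := by
    rw [Ne, CharP.cast_eq_zero_iff F p]; exact hndvd
  -- main computation
  have main : ∀ c : X → F, c ∈ C → ∀ G ∈ 𝒢, ∀ x ∈ G,
      ((lam : F) * (s : F)) * c x + (lam : F) * ∑ z ∈ Finset.univ \ G, c z = 0 := by
    intro c hc G hG x hx
    set N : X → ℕ := fun z => (𝓑.filter (fun B => x ∈ B ∧ z ∈ B)).card with hN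
    have huniq : ∀ G' ∈ 𝒢, x ∈ G' → G' = G := by
      intro G' hG' hxG'
      obtain ⟨G₀, -, hun⟩ := hGpart x
      rw [hun G' ⟨hG', hxG'⟩, hun G ⟨hG, hx⟩]
    have hNzero : ∀ z ∈ G, z ≠ x → N z = 0 := by
      intro z hz hzx
      rcases hpair x z (fun h => hzx h.symm) with ⟨h1, h2⟩ | ⟨h1, h2⟩
      · exact h2
      · exfalso
        have hmem : G ∈ 𝒢.filter (fun G' => x ∈ G' ∧ z ∈ G') :=
          Finset.mem_filter.mpr ⟨hG, hx, hz⟩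
        rw [Finset.card_eq_zero] at h1
        simp [h1] at hmem
    have hNlam : ∀ z, z ∉ G → N z = lam := by
      intro z hz
      have hzx : x ≠ z := fun h => hz (h ▸ hx)
      rcases hpair x z hzx with ⟨h1, h2⟩ | ⟨h1, h2⟩
      · exfalso
        obtain ⟨G', hG'⟩ := Finset.card_eq_one.mp h1
        have hmem : G' ∈ 𝒢.filter (fun G'' => x ∈ G'' ∧ z ∈ G'') := by
          rw [hG']; exact Finset.mem_singleton_self G'
        rw [Finset.mem_filter] at hmem
        exact hz (huniq G' hmem.1 hmem.2.1 ▸ hmem.2.2)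
      · exact h2
    have hsplit : Finset.univ.erase x = (G.erase x) ∪ (Finset.univ \ G) := by
      ext z
      simp only [Finset.mem_erase, Finset.mem_union, Finset.mem_sdiff, Finset.mem_univ,
        true_and, and_true]
      constructor
      · intro hz
        by_cases h : z ∈ G
        · exact Or.inl ⟨hz, h⟩
        · exact Or.inr h
      · rintro (⟨hzx, -⟩ | h)
        · exact hzx
        · intro h'; exact h (h' ▸ hx)
    have hdisj : Disjoint (G.erase x) (Finset.univ \ G) := by
      rw [Finset.disjoint_left]
      intro a ha ha'
      exact (Finset.mem_sdiff.mp ha').2 (Finset.mem_of_mem_erase ha)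
    -- replication number
    have hNx : N x = lam * s := by
      have h1 : ∑ z ∈ Finset.univ.erase x, N z = lam * (ℓ * s - s) := by
        rw [hsplit, Finset.sum_union hdisj]
        have hz1 : ∑ z ∈ G.erase x, N z = 0 :=
          Finset.sum_eq_zero fun z hz =>
            hNzero z (Finset.mem_of_mem_erase hz) (Finset.ne_of_mem_erase hz)
        have hz2 : ∑ z ∈ Finset.univ \ G, N z = (Finset.univ \ G).card * lam := by
          rw [Finset.sum_congr rfl (fun z hz => hNlam z (Finset.mem_sdiff.mp hz).2),
            Finset.sum_const, smul_eq_mul]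
        have hcard : (Finset.univ \ G).card = ℓ * s - s := by
          rw [Finset.card_sdiff_of_subset (Finset.subset_univ G), Finset.card_univ, hX, hGsize G hG]
        rw [hz1, hz2, hcard, zero_add, Nat.mul_comm]
      have h2 : ∑ z ∈ Finset.univ.erase x, N z = N x * (ℓ - 1) := by
        have hNsum : ∀ z, N z = ∑ B ∈ 𝓑, if x ∈ B ∧ z ∈ B then 1 else 0 := by
          intro z; rw [hN]; exact Finset.card_filter _ _
        calc ∑ z ∈ Finset.univ.erase x, N z
            = ∑ z ∈ Finset.univ.erase x, ∑ B ∈ 𝓑, (if x ∈ B ∧ z ∈ B then 1 else 0) :=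
              Finset.sum_congr rfl fun z _ => hNsum z
          _ = ∑ B ∈ 𝓑, ∑ z ∈ Finset.univ.erase x, (if x ∈ B ∧ z ∈ B then 1 else 0) :=
              Finset.sum_comm
          _ = ∑ B ∈ 𝓑, (if x ∈ B then ℓ - 1 else 0) := by
              refine Finset.sum_congr rfl fun B hB => ?_
              by_cases hxB : x ∈ B
              · simp only [hxB, true_and, if_true]
                have hfe : (Finset.univ.erase x).filter (fun z => z ∈ B) = B.erase x := by
                  ext z
                  simp only [Finset.mem_filter, Finset.mem_erase, Finset.mem_univ, true_and,
                    and_true]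
                rw [← Finset.card_filter, hfe, Finset.card_erase_of_mem hxB, hBsize B hB]
              · simp [hxB]
          _ = (𝓑.filter (fun B => x ∈ B)).card * (ℓ - 1) := by
              rw [← Finset.sum_filter, Finset.sum_const, smul_eq_mul]
          _ = N x * (ℓ - 1) := by simp [hN]
      have key : N x * (ℓ - 1) = (lam * s) * (ℓ - 1) := by
        rw [← h2, h1, show ℓ * s - s = (ℓ - 1) * s from by rw [Nat.sub_mul, one_mul]]
        ring
      exact Nat.eq_of_mul_eq_mul_right (by omega) key
    -- the double sum vanishes
    have hA : ∑ z : X, (N z : F) * c z = 0 := by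
      have hc' := (hC c).mp hc
      calc ∑ z : X, (N z : F) * c z
          = ∑ z : X, ∑ B ∈ 𝓑, (if x ∈ B ∧ z ∈ B then c z else 0) := by
            refine Finset.sum_congr rfl fun z _ => ?_
            rw [hN, ← Finset.sum_filter, Finset.sum_const, nsmul_eq_mul]
        _ = ∑ B ∈ 𝓑, ∑ z : X, (if x ∈ B ∧ z ∈ B then c z else 0) := Finset.sum_comm
        _ = 0 := by
            refine Finset.sum_eq_zero fun B hB => ?_
            by_cases hxB : x ∈ B
            · simp only [hxB, true_and]
              rw [Finset.sum_ite_mem, Finset.univ_inter]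
              exact hc' B hB
            · simp [hxB]
    have hsum : ∑ z : X, (N z : F) * c z
        = (N x : F) * c x + (∑ z ∈ G.erase x, (N z : F) * c z
            + ∑ z ∈ Finset.univ \ G, (N z : F) * c z) := by
      rw [← Finset.add_sum_erase _ _ (Finset.mem_univ x), hsplit, Finset.sum_union hdisj]
    have hz1 : ∑ z ∈ G.erase x, (N z : F) * c z = 0 :=
      Finset.sum_eq_zero fun z hz => by
        rw [hNzero z (Finset.mem_of_mem_erase hz) (Finset.ne_of_mem_erase hz)]; simp
    have hz2 : ∑ z ∈ Finset.univ \ G, (N z : F) * c z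
        = (lam : F) * ∑ z ∈ Finset.univ \ G, c z := by
      rw [Finset.mul_sum]
      exact Finset.sum_congr rfl fun z hz => by rw [hNlam z (Finset.mem_sdiff.mp hz).2]
    have h0 := hA
    rw [hsum, hz1, hz2, hNx] at h0
    push_cast at h0 ⊢
    linear_combination h0
  -- first conclusion: constancy on groups
  have hconst : ∀ c ∈ C, ∀ G ∈ 𝒢, ∀ x ∈ G, ∀ y ∈ G, c x = c y := by
    intro c hc G hG x hx y hy
    have h1 := main c hc G hG x hx
    have h2 := main c hc G hG y hy
    have h3 : ((lam : F) * (s : F)) * c x = ((lam : F) * (s : F)) * c y := by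
      linear_combination h1 - h2
    have hne : (lam : F) * (s : F) ≠ 0 := by
      have := hls; push_cast at this; exact this
    exact mul_left_cancel₀ hne h3
  refine ⟨hconst, ?_⟩
  -- dimension bound
  have hrep : ∀ G : {G // G ∈ 𝒢}, ∃ x : X, x ∈ G.1 := by
    intro G
    have hcard := hGsize G.1 G.2
    exact Finset.card_pos.mp (by omega)
  choose g hg using hrep
  let φ : C →ₗ[F] ({G // G ∈ 𝒢} → F) :=
    { toFun := fun c G => (c : X → F) (g G)
      map_add' := fun a b => rfl
      map_smul' := fun m a => rfl }
  have hinj : Function.Injective φ := by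
    intro a b hab
    apply Subtype.ext
    funext x
    obtain ⟨G, ⟨hG, hxG⟩, -⟩ := hGpart x
    have hga := hconst (a : X → F) a.2 G hG x hxG (g ⟨G, hG⟩) (hg ⟨G, hG⟩)
    have hgb := hconst (b : X → F) b.2 G hG x hxG (g ⟨G, hG⟩) (hg ⟨G, hG⟩)
    have hab' : (a : X → F) (g ⟨G, hG⟩) = (b : X → F) (g ⟨G, hG⟩) := congrFun hab ⟨G, hG⟩
    rw [hga, hab', ← hgb]
  calc Module.finrank F C ≤ Module.finrank F ({G // G ∈ 𝒢} → F) :=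
        LinearMap.finrank_le_finrank_of_injective hinj
    _ = Fintype.card {G // G ∈ 𝒢} := Module.finrank_pi F
    _ = 𝒢.card := Fintype.card_coe 𝒢
    _ = ℓ := hGcard
end

section
/- Every MDS linear code of length ℓ and dimension 2 over F_q with 2 ≤ ℓ ≤ q is a generalized Reed-Solomon code; that is, there exist pairwise distinct x_1,…,x_ℓ ∈ F_q and nonzero y_1,…,y_ℓ ∈ F_q such that C = {(y_1 f(x_1),…,y_ℓ f(x_ℓ)) : f ∈ F_q[X], deg f < 2}. -/
open Finset Polynomial

/-- A codeword of a code with minimum distance ≥ ℓ-1 that vanishes at two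
distinct coordinates is zero. -/
lemma two_zeros_aux {F : Type*} [Field F] [Fintype F] [DecidableEq F]
    {ℓ : ℕ} (hℓ2 : 2 ≤ ℓ) {C : Submodule F (Fin ℓ → F)}
    (hdist : ∀ c ∈ C, c ≠ 0 → ℓ - 1 ≤ hammingNorm c)
    {c : Fin ℓ → F} (hc : c ∈ C) {i j : Fin ℓ} (hij : i ≠ j)
    (hi : c i = 0) (hj : c j = 0) : c = 0 := by
  by_contra h
  have h1 := hdist c hc h
  have hsub : (Finset.univ.filter fun k => c k ≠ 0) ⊆ (Finset.univ.erase i).erase j := by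
    intro k hk
    simp only [mem_filter, mem_univ, true_and] at hk
    refine Finset.mem_erase.2 ⟨?_, Finset.mem_erase.2 ⟨?_, Finset.mem_univ k⟩⟩
    · rintro rfl; exact hk hj
    · rintro rfl; exact hk hi
  have hcard : ((Finset.univ.erase i).erase j).card = ℓ - 2 := by
    rw [Finset.card_erase_of_mem (Finset.mem_erase.2 ⟨hij.symm, Finset.mem_univ j⟩),
      Finset.card_erase_of_mem (Finset.mem_univ i), Finset.card_univ, Fintype.card_fin]
    omega
  have h2 : hammingNorm c ≤ ℓ - 2 := by
    rw [← hcard]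
    exact Finset.card_le_card hsub
  omega

/-- Every [ℓ, 2, ℓ−1] MDS linear code over F_q with 2 ≤ ℓ ≤ q is a
generalized Reed-Solomon code. -/
theorem stmt9 {F : Type*} [Field F] [Fintype F] [DecidableEq F]
    (ℓ : ℕ) (hℓ2 : 2 ≤ ℓ) (hℓq : ℓ ≤ Fintype.card F)
    (C : Submodule F (Fin ℓ → F))
    (hdim : Module.finrank F C = 2)
    (hdist : ∀ c ∈ C, c ≠ 0 → ℓ - 1 ≤ hammingNorm c) :
    ∃ x : Fin ℓ → F, Function.Injective x ∧
      ∃ y : Fin ℓ → F, (∀ i, y i ≠ 0) ∧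
        ∀ c : Fin ℓ → F, c ∈ C ↔
          ∃ f : Polynomial F, f.degree < 2 ∧ ∀ i, c i = y i * f.eval (x i) := by
  classical
  -- get a basis u, v of C
  obtain b := Module.finBasisOfFinrankEq F C hdim
  set u : Fin ℓ → F := (b 0 : Fin ℓ → F) with hu_def
  set v : Fin ℓ → F := (b 1 : Fin ℓ → F) with hv_def
  have huC : u ∈ C := (b 0).2
  have hvC : v ∈ C := (b 1).2
  -- independence of u, v
  have hindep : ∀ a b' : F, a • u + b' • v = 0 → a = 0 ∧ b' = 0 := by
    intro a b' hab
    have h0 : a • (b 0) + b' • (b 1) = (0 : C) := by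
      apply Subtype.ext
      simp only [Submodule.coe_add, SetLike.val_smul, ZeroMemClass.coe_zero]
      exact hab
    have h := Fintype.linearIndependent_iff.1 b.linearIndependent ![a, b'] (by
      rw [Fin.sum_univ_two]
      simp only [Matrix.cons_val_zero, Matrix.cons_val_one, Matrix.head_cons]
      exact h0)
    exact ⟨h 0, h 1⟩
  -- membership characterization
  have hmem : ∀ c : Fin ℓ → F, c ∈ C ↔ ∃ a b' : F, c = a • u + b' • v := by
    intro c
    constructor
    · intro hc
      refine ⟨b.repr ⟨c, hc⟩ 0, b.repr ⟨c, hc⟩ 1, ?_⟩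
      have := b.sum_repr ⟨c, hc⟩
      rw [Fin.sum_univ_two] at this
      have := congrArg (Subtype.val) this
      simp only [Submodule.coe_add, SetLike.val_smul] at this
      exact this.symm
    · rintro ⟨a, b', rfl⟩
      exact C.add_mem (C.smul_mem a huC) (C.smul_mem b' hvC)
  -- no coordinate where all codewords vanish
  have hcol : ∀ i, u i ≠ 0 ∨ v i ≠ 0 := by
    intro i
    by_contra h
    push_neg at h
    obtain ⟨hui, hvi⟩ := h
    have hall : ∀ j, u j = 0 := by
      intro j
      by_cases hji : j = i
      · rw [hji]; exact hui
      · have hcC : (u j) • v - (v j) • u ∈ C :=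
          C.sub_mem (C.smul_mem _ hvC) (C.smul_mem _ huC)
        have hzero : (u j) • v - (v j) • u = 0 := by
          refine two_zeros_aux hℓ2 hdist hcC (Ne.symm hji) ?_ ?_
          · simp [hui, hvi]
          · simp [mul_comm]
        have : (-(v j)) • u + (u j) • v = 0 := by
          rw [← hzero]; module
        exact (hindep _ _ this).2
    have : (1 : F) • u + (0 : F) • v = 0 := by
      simp only [one_smul, zero_smul, add_zero]
      funext j; exact hall j
    exact one_ne_zero (hindep 1 0 this).1
  -- find a full-weight codeword w with companion z spanning C
  have key : ∃ w z : Fin ℓ → F, w ∈ C ∧ z ∈ C ∧ (∀ i, w i ≠ 0) ∧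
      (∀ a b' : F, a • w + b' • z = 0 → a = 0 ∧ b' = 0) ∧
      (∀ c : Fin ℓ → F, c ∈ C ↔ ∃ a b' : F, c = a • w + b' • z) := by
    by_cases hfull : ∀ i, u i ≠ 0
    · exact ⟨u, v, huC, hvC, hfull, hindep, hmem⟩
    · push_neg at hfull
      obtain ⟨i0, hi0⟩ := hfull
      set B : Finset F := (Finset.univ.filter fun i => u i ≠ 0).image fun i => v i / u i
        with hB
      have hBcard : B.card < Fintype.card F := by
        have h1 : (Finset.univ.filter fun i => u i ≠ 0) ⊆ Finset.univ.erase i0 := by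
          intro k hk
          simp only [mem_filter, mem_univ, true_and] at hk
          refine Finset.mem_erase.2 ⟨?_, Finset.mem_univ k⟩
          rintro rfl; exact hk hi0
        have h2 : B.card ≤ ℓ - 1 := by
          calc B.card ≤ (Finset.univ.filter fun i => u i ≠ 0).card := Finset.card_image_le
            _ ≤ (Finset.univ.erase i0).card := Finset.card_le_card h1
            _ = ℓ - 1 := by
                rw [Finset.card_erase_of_mem (Finset.mem_univ i0), Finset.card_univ,
                  Fintype.card_fin]
        omega
      have : Bᶜ.Nonempty := by
        rw [← Finset.card_pos, Finset.card_compl]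
        omega
      obtain ⟨t, ht⟩ := this
      rw [Finset.mem_compl] at ht
      refine ⟨v - t • u, u, C.sub_mem hvC (C.smul_mem t huC), huC, ?_, ?_, ?_⟩
      · intro i
        by_cases hui : u i = 0
        · have hvi : v i ≠ 0 := (hcol i).resolve_left (not_not.2 hui)
          simp only [Pi.sub_apply, Pi.smul_apply, smul_eq_mul, hui, mul_zero, sub_zero]
          exact hvi
        · intro hcontra
          apply ht
          rw [hB]
          refine Finset.mem_image.2 ⟨i, Finset.mem_filter.2 ⟨Finset.mem_univ i, hui⟩, ?_⟩
          have hv : v i = t * u i := by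
            have h' : v i - t * u i = 0 := by simpa using hcontra
            linear_combination h'
          rw [hv, mul_div_assoc, div_self hui, mul_one]
      · intro a b' hab
        have h0 : (b' - a * t) • u + a • v = 0 := by
          rw [← hab]; module
        obtain ⟨h1, h2⟩ := hindep _ _ h0
        refine ⟨h2, ?_⟩
        rw [h2] at h1
        simpa using h1
      · intro c
        rw [hmem c]
        constructor
        · rintro ⟨a, b', rfl⟩
          exact ⟨b', a + b' * t, by module⟩
        · rintro ⟨a, b', rfl⟩
          exact ⟨b' - a * t, a, by module⟩
  obtain ⟨w, z, hwC, hzC, hw0, hindep', hmem'⟩ := key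
  -- define x and y
  refine ⟨fun i => z i / w i, ?_, w, hw0, ?_⟩
  · -- injectivity
    intro i j hij
    by_contra hne
    have hne' : i ≠ j := hne
    have hcross : z i * w j = z j * w i := by
      have hij2 : z i / w i = z j / w j := hij
      rwa [div_eq_div_iff (hw0 i) (hw0 j)] at hij2
    have hcC : (w j) • z - (z j) • w ∈ C :=
      C.sub_mem (C.smul_mem _ hzC) (C.smul_mem _ hwC)
    have hzero : (w j) • z - (z j) • w = 0 := by
      refine two_zeros_aux hℓ2 hdist hcC hne' ?_ ?_
      · simp only [Pi.sub_apply, Pi.smul_apply, smul_eq_mul]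
        rw [mul_comm (w j) (z i), hcross]; ring
      · simp only [Pi.sub_apply, Pi.smul_apply, smul_eq_mul]; ring
    have h0 : (-(z j)) • w + (w j) • z = 0 := by
      rw [← hzero]; module
    exact hw0 j (hindep' _ _ h0).2
  · -- polynomial characterization
    intro c
    rw [hmem' c]
    have hwx : ∀ i, w i * (z i / w i) = z i := fun i => by
      rw [mul_comm]
      exact div_mul_cancel₀ _ (hw0 i)
    constructor
    · rintro ⟨a, b', rfl⟩
      refine ⟨Polynomial.C a + Polynomial.C b' * Polynomial.X, ?_, ?_⟩
      · calc (Polynomial.C a + Polynomial.C b' * Polynomial.X).degree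
            ≤ max (Polynomial.C a).degree (Polynomial.C b' * Polynomial.X).degree :=
              Polynomial.degree_add_le _ _
          _ ≤ 1 := by
              refine max_le (le_trans Polynomial.degree_C_le (by norm_num)) ?_
              calc (Polynomial.C b' * Polynomial.X).degree
                  ≤ (Polynomial.C b').degree + Polynomial.X.degree :=
                    Polynomial.degree_mul_le _ _
                _ ≤ 0 + 1 := add_le_add Polynomial.degree_C_le Polynomial.degree_X_le
                _ = 1 := by norm_num
          _ < 2 := by norm_num
      · intro i
        simp only [Pi.add_apply, Pi.smul_apply, smul_eq_mul, Polynomial.eval_add,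
          Polynomial.eval_mul, Polynomial.eval_C, Polynomial.eval_X]
        have := hw0 i
        field_simp
    · rintro ⟨f, hf, hc⟩
      have hf1 : f.degree ≤ 1 := Order.lt_succ_iff.mp hf
      have hfeq := Polynomial.eq_X_add_C_of_degree_le_one hf1
      have heval : ∀ s : F, f.eval s = f.coeff 1 * s + f.coeff 0 := by
        intro s
        conv_lhs => rw [hfeq]
        simp
      refine ⟨f.coeff 0, f.coeff 1, ?_⟩
      funext i
      rw [hc i, heval]
      simp only [Pi.add_apply, Pi.smul_apply, smul_eq_mul]
      have := hw0 i
      field_simp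
      ring
end

section
/- Let C₀ ⊆ F_q^ℓ be a p-divisible linear code (p = char F_q) with p not dividing ℓ, and define C = ker M ⊆ F_p^n, n = qℓ, where M is the incidence matrix of the transversal design of C₀. Then C^⊥ ∩ P ⊆ C, where P is the parity-check code {x ∈ F_p^n : Σ_j x_j = 0}; consequently dim_{F_p} C ≥ (n − 1)/2. -/
/-!
Write `r_c` for the row of `M` indexed by `c ∈ C₀`. Its entries sum to `ℓ`, and
`r_c ⬝ r_{c'} = #{i | c i = c' i} = ℓ - d(c, c')`, which is `ℓ` in `F_p` because
`d(c, c') = |c' - c|` is divisible by `p`. Hence `r_c ⬝ x = ∑ⱼ xⱼ` for every `x` in the row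
space `C^⊥`, so `C^⊥ ∩ P ⊆ ker M = C`. The dimension bound follows, since `P` is (at most)
a hyperplane and `dim C^⊥ + dim C = n`.
-/

open Finset Module Matrix

section RowSpan

variable {R : Type*} [CommRing R] {m n : Type*} [Fintype n]

lemma LinearMap.sum_proj_apply (x : n → R) :
    (∑ j : n, (LinearMap.proj j : (n → R) →ₗ[R] R)) x = ∑ j, x j := by
  simp only [LinearMap.sum_apply, LinearMap.proj_apply]

lemma Matrix.mulVec_apply_eq_sum_of_mem_span_row (M : Matrix m n R)
    (hM : ∀ c c', M c ⬝ᵥ M c' = ∑ j, M c' j) {x : n → R}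
    (hx : x ∈ Submodule.span R (Set.range M)) (c : m) :
    (M *ᵥ x) c = ∑ j, x j := by
  induction hx using Submodule.span_induction with
  | mem y hy =>
    obtain ⟨c', rfl⟩ := hy
    exact hM c c'
  | zero => simp
  | add y z _ _ hy hz => simp [Matrix.mulVec_add, hy, hz, Finset.sum_add_distrib]
  | smul a y _ hy => simp [Matrix.mulVec_smul, hy, Finset.mul_sum]

lemma Matrix.span_row_inf_ker_sum_le_ker (M : Matrix m n R)
    (hM : ∀ c c', M c ⬝ᵥ M c' = ∑ j, M c' j) :
    Submodule.span R (Set.range M) ⊓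
      LinearMap.ker (∑ j : n, (LinearMap.proj j : (n → R) →ₗ[R] R))
      ≤ LinearMap.ker M.mulVecLin := by
  rintro x ⟨hspan, hsum⟩
  rw [SetLike.mem_coe, LinearMap.mem_ker, LinearMap.sum_proj_apply] at hsum
  ext c
  rw [Matrix.mulVecLin_apply, M.mulVec_apply_eq_sum_of_mem_span_row hM hspan, hsum]
  rfl

end RowSpan

lemma Submodule.finrank_le_finrank_inf_ker_add_one {K V : Type*} [Field K] [AddCommGroup V]
    [Module K V] [FiniteDimensional K V] (S : Submodule K V) (f : V →ₗ[K] K) :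
    finrank K S ≤ finrank K ↥(S ⊓ LinearMap.ker f) + 1 := by
  have hker : finrank K V ≤ finrank K (LinearMap.ker f) + 1 := by
    have hrange : finrank K (LinearMap.range f) ≤ 1 :=
      (Submodule.finrank_le _).trans (finrank_self K).le
    have := LinearMap.finrank_range_add_finrank_ker f
    omega
  have hsup := Submodule.finrank_sup_add_finrank_inf_eq S (LinearMap.ker f)
  have := Submodule.finrank_le (S ⊔ LinearMap.ker f)
  omega

lemma Matrix.card_sub_one_le_two_mul_finrank_ker {K : Type*} [Field K] {m n : Type*}
    [Finite m] [Fintype n] (M : Matrix m n K)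
    (hM : Submodule.span K (Set.range M) ⊓
      LinearMap.ker (∑ j : n, (LinearMap.proj j : (n → K) →ₗ[K] K))
      ≤ LinearMap.ker M.mulVecLin) :
    Fintype.card n - 1 ≤ 2 * finrank K (LinearMap.ker M.mulVecLin) := by
  have hrank_nullity : finrank K (Submodule.span K (Set.range M)) +
      finrank K (LinearMap.ker M.mulVecLin) = Fintype.card n := by
    have hrank : finrank K (Submodule.span K (Set.range M)) = M.rank :=
      M.rank_eq_finrank_span_row.symm
    rw [hrank, Matrix.rank, LinearMap.finrank_range_add_finrank_ker, finrank_fintype_fun_eq_card]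
  have := Submodule.finrank_le_finrank_inf_ker_add_one (Submodule.span K (Set.range M))
    (∑ j : n, LinearMap.proj j)
  have := Submodule.finrank_mono hM
  omega

section Incidence

variable (R : Type*) [CommRing R] {F ι : Type*} [DecidableEq F] [Fintype ι]

lemma card_filter_eq_add_hammingDist_eq_card (c c' : ι → F) :
    #{i | c i = c' i} + hammingDist c c' = Fintype.card ι :=
  card_filter_add_card_filter_not _

variable [Fintype F]

/-- Row `c` of the incidence matrix of the transversal design: the indicator of `{(c i, i)}`. -/
def incidenceVector (c : ι → F) : F × ι → R := fun q => if c q.2 = q.1 then 1 else 0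

variable {R}

lemma sum_incidenceVector (c : ι → F) : ∑ q, incidenceVector R c q = Fintype.card ι := by
  rw [Fintype.sum_prod_type_right]
  simp [incidenceVector]

lemma incidenceVector_dotProduct (c c' : ι → F) :
    incidenceVector R c ⬝ᵥ incidenceVector R c' = #{i | c i = c' i} := by
  simp [dotProduct, incidenceVector, Fintype.sum_prod_type_right, eq_comm]

lemma incidenceVector_dotProduct_eq_sum_of_dvd {p : ℕ} (c c' : ι → F)
    (h : p ∣ hammingDist c c') :
    incidenceVector (ZMod p) c ⬝ᵥ incidenceVector (ZMod p) c' =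
      ∑ q, incidenceVector (ZMod p) c' q := by
  rw [incidenceVector_dotProduct, sum_incidenceVector,
    ← card_filter_eq_add_hammingDist_eq_card c c', Nat.cast_add,
    (ZMod.natCast_eq_zero_iff _ _).mpr h, add_zero]

end Incidence

theorem stmt17_general {F : Type*} [Field F] [Fintype F] [DecidableEq F]
    (p ℓ : ℕ) [Fact p.Prime]
    (C₀ : Submodule F (Fin ℓ → F))
    (hdiv : ∀ c ∈ C₀, p ∣ hammingNorm c)
    (M : Matrix C₀ (F × Fin ℓ) (ZMod p))
    (hM : ∀ (c : C₀) (q : F × Fin ℓ),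
      M c q = if c.1 q.2 = q.1 then 1 else 0) :
    Submodule.span (ZMod p) (Set.range fun c : C₀ => M c) ⊓
      LinearMap.ker (∑ j : F × Fin ℓ,
        (LinearMap.proj j : ((F × Fin ℓ) → ZMod p) →ₗ[ZMod p] ZMod p))
      ≤ LinearMap.ker M.mulVecLin ∧
    Fintype.card F * ℓ - 1 ≤
      2 * Module.finrank (ZMod p) (LinearMap.ker M.mulVecLin) := by
  have hrows : ∀ c c' : C₀, M c ⬝ᵥ M c' = ∑ j, M c' j := by
    have hM' : ∀ c : C₀, M c = incidenceVector (ZMod p) c.1 := fun c => funext (hM c)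
    intro c c'
    rw [hM', hM']
    refine incidenceVector_dotProduct_eq_sum_of_dvd _ _ ?_
    rw [hammingDist_eq_hammingNorm]
    exact hdiv _ (C₀.add_mem (C₀.neg_mem c.2) c'.2)
  have hsub := M.span_row_inf_ker_sum_le_ker hrows
  refine ⟨hsub, ?_⟩
  simpa using M.card_sub_one_le_two_mul_finrank_ker hsub

/-- For a p-divisible linear code C₀ ⊆ F_q^ℓ (p = char F_q) with p ∤ ℓ, the
code C = ker M over F_p (M the incidence matrix of the transversal design of
C₀) satisfies C^⊥ ∩ P ⊆ C where P is the parity-check code, and hence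
dim C ≥ (n − 1)/2 with n = qℓ. -/
theorem stmt17 {F : Type*} [Field F] [Fintype F] [DecidableEq F]
    (p ℓ : ℕ) [Fact p.Prime] [CharP F p] (hpl : ¬ p ∣ ℓ)
    (C₀ : Submodule F (Fin ℓ → F))
    (hdiv : ∀ c ∈ C₀, p ∣ hammingNorm c)
    (M : Matrix C₀ (F × Fin ℓ) (ZMod p))
    (hM : ∀ (c : C₀) (q : F × Fin ℓ),
      M c q = if c.1 q.2 = q.1 then 1 else 0) :
    Submodule.span (ZMod p) (Set.range fun c : C₀ => M c) ⊓
      LinearMap.ker (∑ j : F × Fin ℓ,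
        (LinearMap.proj j : ((F × Fin ℓ) → ZMod p) →ₗ[ZMod p] ZMod p))
      ≤ LinearMap.ker M.mulVecLin ∧
    Fintype.card F * ℓ - 1 ≤
      2 * Module.finrank (ZMod p) (LinearMap.ker M.mulVecLin) :=
  stmt17_general p ℓ C₀ hdiv M hM
end

section
/- Let C₀ ⊆ F_q^ℓ be a linear code and C̄₀ its puncturing on the last s coordinates (assumed injective on C₀ so both arrays have no repeated rows). Then for any finite field F_{q′}, the incidence code of C̄₀ over F_{q′} equals the shortening of the incidence code of C₀ on the coordinates F_q × {ℓ−s+1,…,ℓ}: a word c̄ ∈ F_{q′}^{F_q × {1,…,ℓ−s}} lies in IC_{q′}(C̄₀) if and only if its extension by zeros on F_q × {ℓ−s+1,…,ℓ} lies in IC_{q′}(C₀). -/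
lemma aux18 {M : Type*} [AddCommMonoid M] (ℓ s : ℕ) (f : Fin (ℓ - s) → M) :
    ∑ j : Fin ℓ, (if h : (j : ℕ) < ℓ - s then f ⟨(j : ℕ), h⟩ else 0)
      = ∑ j : Fin (ℓ - s), f j := by
  rw [Fin.sum_univ_eq_sum_range fun j => if h : j < ℓ - s then f ⟨j, h⟩ else 0,
    show (∑ j : Fin (ℓ - s), f j)
        = ∑ j : Fin (ℓ - s), (fun j => if h : j < ℓ - s then f ⟨j, h⟩ else 0) (j : ℕ) from
      Finset.sum_congr rfl fun j _ => by simp [j.isLt],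
    Fin.sum_univ_eq_sum_range fun j => if h : j < ℓ - s then f ⟨j, h⟩ else 0]
  refine (Finset.sum_subset (Finset.range_subset_range.mpr (Nat.sub_le ℓ s)) ?_).symm
  intro x _ hx
  simp at hx
  simp [hx]

/-- The incidence code of the puncturing of C₀ on its last s coordinates is
the shortening of the incidence code of C₀ on the coordinates corresponding to
the removed groups: a word lies in IC(C̄₀) iff its extension by zeros lies in
IC(C₀). -/
theorem stmt18 {F K : Type*} [Field F] [Fintype F] [Field K]
    (ℓ s : ℕ) (hs : s ≤ ℓ)
    (C₀ : Submodule F (Fin ℓ → F))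
    (res : (Fin ℓ → F) → (Fin (ℓ - s) → F))
    (hres : ∀ (c : Fin ℓ → F) (j : Fin (ℓ - s)),
      res c j = c (Fin.castLE (Nat.sub_le ℓ s) j))
    (hinj : Set.InjOn res (C₀ : Set (Fin ℓ → F))) :
    ∀ u : F × Fin (ℓ - s) → K,
      (∀ cb ∈ res '' (C₀ : Set (Fin ℓ → F)),
        ∑ j : Fin (ℓ - s), u (cb j, j) = 0) ↔
      (∀ c ∈ C₀,
        ∑ j : Fin ℓ,
          (if h : (j : ℕ) < ℓ - s then u (c j, ⟨(j : ℕ), h⟩) else 0) = 0) := by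
  intro u
  have key : ∀ c : Fin ℓ → F,
      ∑ j : Fin ℓ, (if h : (j : ℕ) < ℓ - s then u (c j, ⟨(j : ℕ), h⟩) else 0)
        = ∑ j : Fin (ℓ - s), u (res c j, j) := by
    intro c
    have := aux18 ℓ s fun j : Fin (ℓ - s) => u (res c j, j)
    rw [← this]
    refine Finset.sum_congr rfl fun j _ => ?_
    split
    · rw [hres]
      rfl
    · rfl
  constructor
  · intro h c hc
    rw [key]
    exact h (res c) ⟨c, hc, rfl⟩
  · intro h cb hcb
    obtain ⟨c, hc, rfl⟩ := hcb
    rw [← key]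
    exact h c hc
end
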